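/- Let V be a real vector space of even dimension 2n and let η ∈ ⋀²V*. The n-fold wedge power η^{∧n} is nonzero if and only if the map ⋀^{n-k}V* → ⋀^{n+k}V* given by ω ↦ ω ∧ η^{∧k} is an isomorphism for all k = 1,…,n. Equivalently, for a symplectic (nondegenerate) 2-form η on V, all the Lefschetz maps ω ↦ ω ∧ η^{∧k} on the exterior algebra are isomorphisms. -/

import Mathlib

set_option synthInstance.maxHeartbeats 400000

set_option maxHeartbeats 1000000
set_option linter.unnecessarySimpa false
set_option linter.unusedSectionVars false

open ExteriorAlgebra CliffordAlgebra

namespace HL3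

variable {M : Type*} [AddCommGroup M] [Module ℝ M]

local notation "A" => ExteriorAlgebra ℝ M
local notation "G" p => (⋀[ℝ]^p M : Submodule ℝ (ExteriorAlgebra ℝ M))





/-- contraction, as specialization -/
noncomputable abbrev ct (ξ : Module.Dual ℝ M) : ExteriorAlgebra ℝ M →ₗ[ℝ] ExteriorAlgebra ℝ M :=
  CliffordAlgebra.contractLeft (Q := (0 : QuadraticForm ℝ M)) ξ

lemma ct_ι_mul (ξ : Module.Dual ℝ M) (m : M) (x : A) :
    ct ξ (ExteriorAlgebra.ι ℝ m * x) = ξ m • x - ExteriorAlgebra.ι ℝ m * ct ξ x := by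
  simpa using contractLeft_ι_mul (Q := (0 : QuadraticForm ℝ M)) (d := ξ) m x

lemma mem_mul {p q : ℕ} {x y : A} (hx : x ∈ G p) (hy : y ∈ G q) : x * y ∈ G (p+q) := by
  rw [exteriorPower, pow_add]
  exact Submodule.mul_mem_mul hx hy

lemma pow_mem {η : A} (hη : η ∈ G 2) (k : ℕ) : η ^ k ∈ G (2*k) := by
  induction k with
  | zero => simpa [exteriorPower] using Submodule.one_mem_one (R := ℝ)
  | succ k ih =>
      have := mem_mul hη ih
      rw [← pow_succ'] at this
      convert this using 2
      ring

lemma ct_zeroth (ξ : Module.Dual ℝ M) {x : A} (hx : x ∈ G 0) : ct ξ x = 0 := by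
  rw [exteriorPower, pow_zero] at hx
  obtain ⟨r, rfl⟩ := Submodule.mem_one.mp hx
  simpa using contractLeft_algebraMap (Q := (0 : QuadraticForm ℝ M)) ξ r

lemma ct_mem (ξ : Module.Dual ℝ M) : ∀ p : ℕ, ∀ x ∈ G p, ct ξ x ∈ G (p - 1) := by
  intro p
  induction p with
  | zero => intro x hx; rw [ct_zeroth ξ hx]; exact Submodule.zero_mem _
  | succ p ih =>
      intro x hx
      rw [exteriorPower, pow_succ'] at hx
      refine Submodule.mul_induction_on hx (fun a ha y hy => ?_) (fun y z hy hz => ?_)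
      · obtain ⟨m, rfl⟩ := ha
        rw [ct_ι_mul]
        refine Submodule.sub_mem _ (Submodule.smul_mem _ _ hy) ?_
        rcases p with _ | p
        · rw [ct_zeroth ξ hy, mul_zero]; exact Submodule.zero_mem _
        · have h1 : ExteriorAlgebra.ι ℝ m ∈ G 1 := by
            rw [exteriorPower, pow_one]; exact LinearMap.mem_range_self _ m
          have := mem_mul h1 (ih y hy)
          convert this using 2
          omega
      · rw [map_add]; exact Submodule.add_mem _ hy hz

lemma ct_first (ξ : Module.Dual ℝ M) {x : A} (hx : x ∈ G 1) :
    ∃ r : ℝ, ct ξ x = algebraMap ℝ (ExteriorAlgebra ℝ M) r := by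
  rw [exteriorPower, pow_one] at hx
  obtain ⟨m, rfl⟩ := hx
  exact ⟨ξ m, by simpa using contractLeft_ι (Q := (0 : QuadraticForm ℝ M)) (d := ξ) m⟩


lemma ct_ι (ξ : Module.Dual ℝ M) (m : M) :
    ct ξ (ExteriorAlgebra.ι ℝ m) = algebraMap ℝ (ExteriorAlgebra ℝ M) (ξ m) := by
  simpa using contractLeft_ι (Q := (0 : QuadraticForm ℝ M)) (d := ξ) m

lemma ι_swap (u v : M) : ExteriorAlgebra.ι ℝ u * ExteriorAlgebra.ι ℝ v
    = - (ExteriorAlgebra.ι ℝ v * ExteriorAlgebra.ι ℝ u) :=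
  eq_neg_of_add_eq_zero_left (ExteriorAlgebra.ι_add_mul_swap (R := ℝ) u v)
/-- I7: product rule for a 2-form -/
lemma ct_eta_mul (ξ : Module.Dual ℝ M) {η : A} (hη : η ∈ G 2) (y : A) :
    ct ξ (η * y) = (ct ξ η) * y + η * ct ξ y := by
  have h2 : η ∈ (LinearMap.range (ExteriorAlgebra.ι ℝ : M →ₗ[ℝ] A)) *
      (LinearMap.range (ExteriorAlgebra.ι ℝ : M →ₗ[ℝ] A)) := by
    rwa [exteriorPower, pow_two] at hη
  refine Submodule.mul_induction_on h2 (fun a ha b hb => ?_) (fun u v ihu ihv => ?_)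
  · obtain ⟨a, rfl⟩ := ha
    obtain ⟨b, rfl⟩ := hb
    rw [mul_assoc, ct_ι_mul, ct_ι_mul, ct_ι_mul, ct_ι]
    simp only [Algebra.algebraMap_eq_smul_one, mul_sub, sub_mul, smul_mul_assoc,
      mul_smul_comm, mul_one, mul_assoc]
    abel
  · rw [add_mul, map_add, ihu, ihv, map_add]
    simp only [add_mul]
    abel

/-- 2-forms are central -/
lemma commute_eta {η : A} (hη : η ∈ G 2) (x : A) : η * x = x * η := by
  have h2 : η ∈ (LinearMap.range (ExteriorAlgebra.ι ℝ : M →ₗ[ℝ] A)) *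
      (LinearMap.range (ExteriorAlgebra.ι ℝ : M →ₗ[ℝ] A)) := by
    rwa [exteriorPower, pow_two] at hη
  refine Submodule.mul_induction_on h2 (fun a ha b hb => ?_) (fun u v ihu ihv => ?_)
  · obtain ⟨a, rfl⟩ := ha
    obtain ⟨b, rfl⟩ := hb
    induction x using ExteriorAlgebra.induction with
    | algebraMap r => rw [← Algebra.commutes r]
    | ι m =>
        rw [mul_assoc, ι_swap b m, mul_neg, ← mul_assoc, ι_swap a m, neg_mul, neg_neg,
          mul_assoc]
    | mul x y ihx ihy => rw [← mul_assoc, ihx, mul_assoc, ihy, mul_assoc]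
    | add x y ihx ihy => rw [mul_add, ihx, ihy, add_mul]
  · rw [add_mul, ihu, ihv, mul_add]

/-- E-type operator acts as degree on graded pieces -/
lemma degree_sum {N : ℕ} (β : Fin N → M) (χ : Fin N → Module.Dual ℝ M)
    (hid : ∀ m : M, ∑ k, χ k m • β k = m) :
    ∀ p : ℕ, ∀ x ∈ G p, ∑ k, ExteriorAlgebra.ι ℝ (β k) * ct (χ k) x = (p : ℝ) • x := by
  intro p
  induction p with
  | zero =>
      intro x hx
      rw [exteriorPower, pow_zero] at hx
      obtain ⟨r, rfl⟩ := Submodule.mem_one.mp hx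
      simp [contractLeft_algebraMap]
  | succ p ih =>
      intro x hx
      rw [exteriorPower, pow_succ'] at hx
      refine Submodule.mul_induction_on hx (fun a ha y hy => ?_) (fun u v ihu ihv => ?_)
      · obtain ⟨m, rfl⟩ := ha
        have expand : ∀ k, ExteriorAlgebra.ι ℝ (β k) * ct (χ k) (ExteriorAlgebra.ι ℝ m * y)
            = χ k m • (ExteriorAlgebra.ι ℝ (β k) * y)
              + ExteriorAlgebra.ι ℝ m * (ExteriorAlgebra.ι ℝ (β k) * ct (χ k) y) := by
          intro k
          rw [ct_ι_mul, mul_sub, mul_smul_comm, ← mul_assoc, ι_swap (β k) m, neg_mul,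
            mul_assoc, sub_neg_eq_add]
        rw [Finset.sum_congr rfl (fun k _ => expand k), Finset.sum_add_distrib,
          ← Finset.mul_sum, ih y hy]
        have hsum : (∑ k, χ k m • (ExteriorAlgebra.ι ℝ (β k) * y))
            = ExteriorAlgebra.ι ℝ m * y := by
          simp_rw [← smul_mul_assoc, ← Finset.sum_mul, ← map_smul, ← map_sum, hid]
        rw [hsum, mul_smul_comm]
        push_cast
        module
      · simp only [map_add, mul_add, Finset.sum_add_distrib, ihu, ihv, smul_add]





lemma top_vanish [FiniteDimensional ℝ M] {q : ℕ} (hq : Module.finrank ℝ M < q)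
    {x : A} (hx : x ∈ G q) : x = 0 := by
  have hspan := (ExteriorAlgebra.ιMulti_span_fixedDegree ℝ q (M := M)).symm ▸ hx
  -- every generator is zero
  have hz : ∀ y ∈ Set.range (ExteriorAlgebra.ιMulti ℝ q (M := M)), y = (0 : A) := by
    rintro y ⟨v, rfl⟩
    refine AlternatingMap.map_linearDependent _ v (fun hli => ?_)
    have := hli.fintype_card_le_finrank
    simp only [Fintype.card_fin] at this
    omega
  have : Submodule.span ℝ (Set.range (ExteriorAlgebra.ιMulti ℝ q (M := M))) ≤ ⊥ := by
    rw [Submodule.span_le]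
    intro y hy
    simp [hz y hy]
  simpa using this hspan
/-- the linear map `Dual M → M` induced by contraction into a 2-form -/
noncomputable def Tmap (η : A) : Module.Dual ℝ M →ₗ[ℝ] M :=
  ExteriorAlgebra.ιInv ∘ₗ (CliffordAlgebra.contractLeft (Q := (0 : QuadraticForm ℝ M))).flip η

lemma ι_Tmap {η : A} (hη : η ∈ G 2) (ξ : Module.Dual ℝ M) :
    ExteriorAlgebra.ι ℝ (Tmap η ξ) = ct ξ η := by
  have h1 : ct ξ η ∈ G 1 := ct_mem ξ 2 η hη
  rw [exteriorPower, pow_one] at h1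
  obtain ⟨m, hm⟩ := h1
  have : Tmap η ξ = m := by
    simp only [Tmap, LinearMap.coe_comp, Function.comp_apply, LinearMap.flip_apply]
    rw [show (CliffordAlgebra.contractLeft (Q := (0 : QuadraticForm ℝ M))) ξ η = ct ξ η from rfl,
      ← hm]
    exact ExteriorAlgebra.ι_leftInverse m
  rw [this, hm]

lemma Tmap_skew {η : A} (hη : η ∈ G 2) (ξ ζ : Module.Dual ℝ M) :
    ξ (Tmap η ζ) = - ζ (Tmap η ξ) := by
  have h := contractLeft_comm (Q := (0 : QuadraticForm ℝ M)) (d := ξ) (d' := ζ) η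
  have h1 : ct ξ (ExteriorAlgebra.ι ℝ (Tmap η ζ)) = - ct ζ (ExteriorAlgebra.ι ℝ (Tmap η ξ)) := by
    rw [ι_Tmap hη, ι_Tmap hη]
    exact h
  simp only [show ∀ χ m, ct χ (ExteriorAlgebra.ι ℝ m) = algebraMap ℝ (ExteriorAlgebra ℝ M) (χ m) from
    fun χ m => by simpa using contractLeft_ι (Q := (0 : QuadraticForm ℝ M)) (d := χ) m] at h1
  rw [← map_neg (algebraMap ℝ (ExteriorAlgebra ℝ M))] at h1
  exact (ExteriorAlgebra.algebraMap_inj M _ _).mp h1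

lemma ct_pow_eta (ξ : Module.Dual ℝ M) {η : A} (hη : η ∈ G 2) (hz : ct ξ η = 0)
    (j : ℕ) (w : A) : ct ξ (η ^ j * w) = η ^ j * ct ξ w := by
  induction j with
  | zero => simp
  | succ j ih =>
      rw [pow_succ', mul_assoc, ct_eta_mul ξ hη, hz, zero_mul, zero_add, ih, mul_assoc]

lemma Tmap_bijective [FiniteDimensional ℝ M] {n : ℕ} (hr : Module.finrank ℝ M = 2*n)
    {η : A} (hη : η ∈ G 2) (hne : η ^ n ≠ 0) : Function.Bijective (Tmap η) := by
  have hinj : Function.Injective (Tmap η) := by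
    rw [← LinearMap.ker_eq_bot, LinearMap.ker_eq_bot']
    intro ξ hξ
    by_contra hne'
    -- ξ ≠ 0 : get m with ξ m = 1
    obtain ⟨m₀, hm₀⟩ : ∃ m, ξ m ≠ 0 := by
      by_contra h
      push_neg at h
      exact hne' (LinearMap.ext fun m => h m)
    set m := (ξ m₀)⁻¹ • m₀ with hm
    have hξm : ξ m = 1 := by
      rw [hm, map_smul, smul_eq_mul, inv_mul_cancel₀ hm₀]
    -- n ≥ 1
    obtain ⟨n', rfl⟩ : ∃ n', n = n' + 1 := by
      rcases n with _ | n'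
      · exfalso
        have h0 : Module.finrank ℝ M = 0 := by omega
        have hsub : Subsingleton M := Module.finrank_zero_iff.mp h0
        refine hne' ?_
        ext mm
        rw [Subsingleton.elim mm 0, map_zero]
        rfl
      · exact ⟨n', rfl⟩
    have hctη : ct ξ η = 0 := by
      rw [← ι_Tmap hη, hξ, map_zero]
    set z : A := ExteriorAlgebra.ι ℝ m * η with hzdef
    have hctz : ct ξ z = η := by
      rw [hzdef, ct_ι_mul, hξm, one_smul, hctη, mul_zero, sub_zero]
    have hzmem : z ∈ G 3 := by
      have h1 : ExteriorAlgebra.ι ℝ m ∈ G 1 := by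
        rw [exteriorPower, pow_one]; exact LinearMap.mem_range_self _ m
      simpa using mem_mul h1 hη
    have hmem : η ^ n' * z ∈ G (2*n' + 3) := by
      simpa using mem_mul (pow_mem hη n') hzmem
    have hzero : η ^ n' * z = 0 := top_vanish (by omega) hmem
    have h2 : η ^ n' * ct ξ z = ct ξ (η ^ n' * z) := (ct_pow_eta ξ hη hctη n' z).symm
    rw [hctz, hzero, map_zero] at h2
    exact hne (by rw [pow_succ, h2])
  refine ⟨hinj, ?_⟩
  have : Module.finrank ℝ (Module.Dual ℝ M) = Module.finrank ℝ M := Subspace.dual_finrank_eq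
  exact (LinearMap.injective_iff_surjective_of_finrank_eq_finrank this).mp hinj

/-- the dual Lefschetz operator -/
lemma exists_lam [FiniteDimensional ℝ M] {n : ℕ} (hr : Module.finrank ℝ M = 2*n)
    {η : A} (hη : η ∈ G 2) (hne : η ^ n ≠ 0) :
    ∃ lam : ExteriorAlgebra ℝ M →ₗ[ℝ] ExteriorAlgebra ℝ M,
      (∀ p : ℕ, ∀ x ∈ G (p+2), lam x ∈ G p) ∧
      (∀ x ∈ G 0, lam x = 0) ∧ (∀ x ∈ G 1, lam x = 0) ∧
      (∀ p : ℕ, ∀ x ∈ G p, lam (η * x) = η * lam x + (((p:ℝ) - (n:ℝ))) • x) := by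
  classical
  set T := Tmap η with hT
  have hbij := Tmap_bijective hr hη hne
  set e : Module.Dual ℝ M ≃ₗ[ℝ] M := LinearEquiv.ofBijective T hbij with he
  set b := Module.finBasis ℝ M with hb
  set N := Module.finrank ℝ M with hN
  set ξ : Fin N → Module.Dual ℝ M := fun k => e.symm (b k) with hξ
  set ε : Fin N → Module.Dual ℝ M := fun k => b.coord k with hε
  have hTξ : ∀ k, T (ξ k) = b k := by
    intro k
    have : e (ξ k) = b k := by rw [hξ]; exact e.apply_symm_apply _
    simpa [he, LinearEquiv.ofBijective_apply] using this
  refine ⟨(1/2 : ℝ) • ∑ k : Fin N, (ct (ξ k)) ∘ₗ (ct (ε k)), ?_, ?_, ?_, ?_⟩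
  · intro p x hx
    simp only [LinearMap.smul_apply, LinearMap.sum_apply, LinearMap.coe_comp,
      Function.comp_apply]
    refine Submodule.smul_mem _ _ (Submodule.sum_mem _ fun k _ => ?_)
    have h1 := ct_mem (ε k) (p+2) x hx
    have h2 := ct_mem (ξ k) (p+1) _ (by simpa using h1)
    simpa using h2
  · intro x hx
    simp only [LinearMap.smul_apply, LinearMap.sum_apply, LinearMap.coe_comp,
      Function.comp_apply]
    rw [Finset.sum_congr rfl (fun k _ => by rw [ct_zeroth (ε k) hx, map_zero])]
    simp
  · intro x hx
    simp only [LinearMap.smul_apply, LinearMap.sum_apply, LinearMap.coe_comp,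
      Function.comp_apply]
    rw [Finset.sum_congr rfl (fun k _ => by
      rw [ct_zeroth (ξ k) (by simpa using ct_mem (ε k) 1 x hx)])]
    simp
  · intro p x hx
    -- per-k expansion
    have hper : ∀ k, ct (ξ k) (ct (ε k) (η * x))
        = (ξ k (T (ε k))) • x - ExteriorAlgebra.ι ℝ (T (ε k)) * ct (ξ k) x
          + ExteriorAlgebra.ι ℝ (T (ξ k)) * ct (ε k) x + η * ct (ξ k) (ct (ε k) x) := by
      intro k
      rw [ct_eta_mul (ε k) hη, ← ι_Tmap hη, map_add, ct_ι_mul, ct_eta_mul (ξ k) hη,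
        ← ι_Tmap hη]
      abel
    -- scalar sum
    have hscal : ∀ k : Fin N, ξ k (T (ε k)) = -1 := by
      intro k
      rw [hT, Tmap_skew hη, ← hT, hTξ k]
      simp [hε, Module.Basis.coord_apply]
    -- first operator sum  (β k = -(T (ε k)), χ = ξ)
    have hop1 : ∑ k : Fin N, ExteriorAlgebra.ι ℝ (-(T (ε k))) * ct (ξ k) x = (p:ℝ) • x := by
      refine degree_sum _ _ ?_ p x hx
      intro m
      obtain ⟨ζ, rfl⟩ := hbij.2 m
      have h1 : ∀ k, ξ k (T ζ) = - ζ (b k) := by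
        intro k
        rw [hT, Tmap_skew hη, ← hT, hTξ k]
      simp_rw [← hT, h1]
      rw [show ∑ k : Fin N, (-ζ (b k)) • (-(T (ε k))) = T (∑ k : Fin N, ζ (b k) • ε k) by
        rw [map_sum]; congr 1; ext k; rw [map_smul]; module]
      have hzeta : (∑ k : Fin N, ζ (b k) • ε k) = ζ := by
        refine b.ext fun j => ?_
        simp [hε, LinearMap.sum_apply, Module.Basis.coord_apply, Module.Basis.repr_self,
          Finsupp.single_apply, Finset.sum_ite_eq', mul_comm]
      rw [hzeta]
    -- second operator sum (β k = b k, χ = ε)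
    have hop2 : ∑ k : Fin N, ExteriorAlgebra.ι ℝ (T (ξ k)) * ct (ε k) x = (p:ℝ) • x := by
      simp_rw [hTξ]
      refine degree_sum _ _ ?_ p x hx
      intro m
      simp_rw [hε, Module.Basis.coord_apply]
      exact b.sum_repr m
    have hNval : (N : ℝ) = 2 * (n:ℝ) := by exact_mod_cast congrArg (fun t : ℕ => (t:ℝ)) hr
    simp only [LinearMap.smul_apply, LinearMap.sum_apply, LinearMap.coe_comp,
      Function.comp_apply]
    rw [Finset.sum_congr rfl (fun k _ => hper k)]
    simp only [Finset.sum_add_distrib, Finset.sum_sub_distrib, ← Finset.smul_sum,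
      ← Finset.mul_sum]
    rw [Finset.sum_congr rfl (fun k _ => by rw [hscal k])]
    have hneg : ∑ k : Fin N, ExteriorAlgebra.ι ℝ (T (ε k)) * ct (ξ k) x = -((p:ℝ) • x) := by
      rw [← hop1]
      simp [map_neg]
    rw [hneg, hop2]
    rw [Finset.sum_const, Finset.card_univ, Fintype.card_fin]
    rw [← Nat.cast_smul_eq_nsmul ℝ N, hNval, mul_smul_comm]
    module

lemma eta_pow_succ_mul {η : A} (r : ℕ) (x : A) : η^(r+1) * x = η * (η^r * x) := by
  rw [pow_succ', mul_assoc]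

section Sl2

variable {n : ℕ} {η : ExteriorAlgebra ℝ M} (hη : η ∈ ⋀[ℝ]^2 M)
  (lam : ExteriorAlgebra ℝ M →ₗ[ℝ] ExteriorAlgebra ℝ M)
  (hmem : ∀ p : ℕ, ∀ x ∈ ⋀[ℝ]^(p+2) M, lam x ∈ ⋀[ℝ]^p M)
  (h0 : ∀ x ∈ ⋀[ℝ]^0 M, lam x = 0) (h1 : ∀ x ∈ ⋀[ℝ]^1 M, lam x = 0)
  (hF3 : ∀ p : ℕ, ∀ x ∈ ⋀[ℝ]^p M, lam (η * x) = η * lam x + (((p:ℝ) - (n:ℝ))) • x)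

include hη hF3

/-- F5 -/
lemma lam_pow_eta : ∀ (r p : ℕ), ∀ x ∈ G p,
    lam (η^(r+1) * x) = η^(r+1) * lam x + (((r:ℝ)+1) * ((p:ℝ) + (r:ℝ) - (n:ℝ))) • (η^r * x) := by
  intro r
  induction r with
  | zero =>
      intro p x hx
      simpa [pow_one] using hF3 p x hx
  | succ r ih =>
      intro p x hx
      have hxr : η^(r+1) * x ∈ G (2*(r+1) + p) := mem_mul (pow_mem hη (r+1)) hx
      rw [eta_pow_succ_mul (η := η) (r+1) x, hF3 _ _ hxr, ih p x hx]
      rw [mul_add, ← eta_pow_succ_mul (η := η) (r+1) (lam x), mul_smul_comm,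
        ← eta_pow_succ_mul (η := η) r x, add_assoc, ← add_smul]
      congr 2
      push_cast
      ring

omit hη hF3

include hη hF3 in
/-- descent lemma -/
lemma descent : ∀ (s p : ℕ), p + s ≤ n → ∀ x ∈ ⋀[ℝ]^p M, lam x = 0 → η^s * x = 0 → x = 0 := by
  intro s
  induction s with
  | zero =>
      intro p _ x _ _ hx0
      simpa using hx0
  | succ s ih =>
      intro p hps x hx hlx hsx
      have h5 := lam_pow_eta hη lam hF3 s p x hx
      rw [hsx, map_zero, hlx, mul_zero, zero_add] at h5
      have hc : (((s:ℝ)+1) * ((p:ℝ) + (s:ℝ) - (n:ℝ))) ≠ 0 := by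
        refine mul_ne_zero (by positivity) (sub_ne_zero.mpr ?_)
        have hlt : p + s < n := by omega
        intro hcon
        have : ((p + s : ℕ) : ℝ) = (n : ℝ) := by push_cast; linarith
        have := Nat.cast_injective (R := ℝ) this
        omega
      have := (smul_eq_zero.mp h5.symm).resolve_left hc
      exact ih p (by omega) x hx hlx this

include hη hmem h0 h1 hF3 in
/-- hard Lefschetz injectivity -/
lemma hl_inj : ∀ p : ℕ, p ≤ n → ∀ x ∈ ⋀[ℝ]^p M, η^(n-p) * x = 0 → x = 0 := by
  intro p
  induction p using Nat.strong_induction_on with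
  | _ p ihp =>
    intro hpn x hx hpow
    have hlx : lam x = 0 := by
      match p, hx with
      | 0, hx => exact h0 x hx
      | 1, hx => exact h1 x hx
      | (q+2), hx =>
          have hlmem : lam x ∈ ⋀[ℝ]^q M := hmem q x hx
          have h5 := lam_pow_eta hη lam hF3 ((n-(q+2))+1) (q+2) x hx
          have hz1 : η^((n-(q+2))+1) * x = 0 := by
            rw [eta_pow_succ_mul (η := η), hpow, mul_zero]
          have hz2 : η^((n-(q+2))+1+1) * x = 0 := by
            rw [eta_pow_succ_mul (η := η), hz1, mul_zero]
          rw [hz2, map_zero, hz1, smul_zero, add_zero] at h5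
          have : η^(n-q) * lam x = 0 := by
            rw [show n - q = (n-(q+2))+1+1 by omega]
            exact h5.symm
          exact ihp q (by omega) (by omega) (lam x) hlmem this
    exact descent hη lam hF3 (n-p) p (by omega) x hx hlx hpow

omit hη hF3

include hmem in
lemma lamIter_mem : ∀ (j p : ℕ), ∀ x ∈ ⋀[ℝ]^(p + 2*j) M, ((lam^j : Module.End ℝ (ExteriorAlgebra ℝ M)) x) ∈ ⋀[ℝ]^p M := by
  intro j
  induction j with
  | zero => intro p x hx; simpa using hx
  | succ j ih =>
      intro p x hx
      have h1 : lam x ∈ ⋀[ℝ]^(p + 2*j) M := by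
        have := hmem (p + 2*j) x (by rw [show p + 2*j + 2 = p + 2*(j+1) by omega]; exact hx)
        exact this
      have := ih p (lam x) h1
      rw [pow_succ, Module.End.mul_apply]
      exact this

include hη hmem hF3 in
/-- coprimitive elements are divisible: if `η * δ = 0`, `δ ∈ ⋀^{m+2k}`, `k+m = n`,
then `δ = η^k * ρ` with `ρ ∈ ⋀^m`. -/
lemma copri : ∀ (k m : ℕ), k + m = n → ∀ δ ∈ ⋀[ℝ]^(m + 2*k) M, η * δ = 0 →
    ∃ ρ ∈ ⋀[ℝ]^m M, η^k * ρ = δ := by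
  intro k m hkm δ hδ hcp
  -- the star identities
  have star : ∀ j : ℕ, j + 1 ≤ k →
      η * ((lam^(j+1) : Module.End ℝ (ExteriorAlgebra ℝ M)) δ)
        = (-(((j:ℝ)+1) * ((k:ℝ)-(j:ℝ)))) • ((lam^j : Module.End ℝ (ExteriorAlgebra ℝ M)) δ) := by
    intro j
    induction j with
    | zero =>
        intro _
        have h3 := hF3 (m + 2*k) δ hδ
        rw [hcp, map_zero] at h3
        have hc : ((m + 2*k : ℕ) : ℝ) - (n:ℝ) = (k:ℝ) := by
          have : ((m + 2*k : ℕ) : ℝ) = (m:ℝ) + 2*(k:ℝ) := by push_cast; ring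
          rw [this]
          have : (n:ℝ) = (k:ℝ) + (m:ℝ) := by exact_mod_cast congrArg (fun t : ℕ => (t:ℝ)) hkm.symm
          linarith
        rw [hc] at h3
        have h6 := eq_neg_of_add_eq_zero_left h3.symm
        simp only [zero_add, pow_one, pow_zero, Module.End.one_apply]
        rw [h6]
        push_cast
        module
    | succ j ihj =>
        intro hjk
        have ihj' := ihj (by omega)
        have hmemj : ((lam^(j+1) : Module.End ℝ (ExteriorAlgebra ℝ M)) δ) ∈ ⋀[ℝ]^(m + 2*(k-(j+1))) M := by
          refine lamIter_mem lam hmem (j+1) _ δ ?_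
          rw [show m + 2*(k-(j+1)) + 2*(j+1) = m + 2*k by omega]
          exact hδ
        have h3 := hF3 _ _ hmemj
        rw [ihj', map_smul] at h3
        have hc : ((m + 2*(k-(j+1)) : ℕ) : ℝ) - (n:ℝ) = (k:ℝ) - 2*(j:ℝ) - 2 := by
          have h1 : ((m + 2*(k-(j+1)) : ℕ) : ℝ) = (m:ℝ) + 2*((k:ℝ) - (j:ℝ) - 1) := by
            have : (m + 2*(k-(j+1)) : ℕ) = m + 2*k - 2*j - 2 := by omega
            rw [this]
            have h2 : ((m + 2*k - 2*j - 2 : ℕ) : ℝ) = ((m + 2*k : ℕ):ℝ) - 2*(j:ℝ) - 2 := by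
              have : (m + 2*k - 2*j - 2 : ℕ) + 2*j + 2 = m + 2*k := by omega
              calc ((m + 2*k - 2*j - 2 : ℕ) : ℝ)
                  = (((m + 2*k - 2*j - 2 : ℕ) + 2*j + 2 : ℕ) : ℝ) - 2*(j:ℝ) - 2 := by
                    push_cast; ring
                _ = ((m + 2*k : ℕ):ℝ) - 2*(j:ℝ) - 2 := by rw [this]
            rw [h2]; push_cast; ring
          have h4 : (n:ℝ) = (k:ℝ) + (m:ℝ) := by exact_mod_cast congrArg (fun t : ℕ => (t:ℝ)) hkm.symm
          rw [h1, h4]; ring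
        rw [hc] at h3
        have e1 : lam ((lam^(j:ℕ) : Module.End ℝ (ExteriorAlgebra ℝ M)) δ)
            = ((lam^(j+1) : Module.End ℝ (ExteriorAlgebra ℝ M)) δ) := by
          rw [pow_succ']; rfl
        have e2 : lam ((lam^(j+1) : Module.End ℝ (ExteriorAlgebra ℝ M)) δ)
            = ((lam^(j+1+1) : Module.End ℝ (ExteriorAlgebra ℝ M)) δ) := by
          rw [show (lam^(j+1+1) : Module.End ℝ (ExteriorAlgebra ℝ M))
            = lam * lam^(j+1) from pow_succ' lam (j+1)]
          rfl
        rw [e1, e2] at h3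
        rw [eq_sub_of_add_eq h3.symm, ← sub_smul]
        congr 1
        push_cast
        ring
  have gchain : ∀ i : ℕ, i ≤ k → ∃ d : ℝ, d ≠ 0 ∧
      η^i * ((lam^i : Module.End ℝ (ExteriorAlgebra ℝ M)) δ) = d • δ := by
    intro i
    induction i with
    | zero => exact fun _ => ⟨1, one_ne_zero, by simp⟩
    | succ i ihi =>
        intro hik
        obtain ⟨d, hd, hdi⟩ := ihi (by omega)
        refine ⟨(-(((i:ℝ)+1) * ((k:ℝ)-(i:ℝ)))) * d, ?_, ?_⟩
        · refine mul_ne_zero (neg_ne_zero.mpr (mul_ne_zero (by positivity) ?_)) hd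
          have hik' : (i:ℝ) < (k:ℝ) := by exact_mod_cast (by omega : i < k)
          intro hcon
          linarith
        · rw [pow_succ, mul_assoc, star i (by omega), mul_smul_comm, hdi, smul_smul]
  obtain ⟨d, hd, hdk⟩ := gchain k le_rfl
  refine ⟨d⁻¹ • ((lam^k : Module.End ℝ (ExteriorAlgebra ℝ M)) δ), ?_, ?_⟩
  · exact Submodule.smul_mem _ _ (lamIter_mem lam hmem k m δ hδ)
  · rw [mul_smul_comm, hdk, smul_smul, inv_mul_cancel₀ hd, one_smul]

include hη hmem hF3 in
lemma hl_surj (htop : ∀ q : ℕ, 2*n < q → ∀ x ∈ ⋀[ℝ]^q M, x = 0) :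
    ∀ (m k : ℕ), k + m = n → ∀ ψ ∈ ⋀[ℝ]^(n+k) M, ∃ ω ∈ ⋀[ℝ]^m M, η^k * ω = ψ := by
  intro m
  induction m using Nat.strong_induction_on with
  | _ m ihm =>
    intro k hkm ψ hψ
    have hψ' : ψ ∈ ⋀[ℝ]^(m + 2*k) M := by rw [show m + 2*k = n + k by omega]; exact hψ
    by_cases hm2 : m < 2
    · have hcp : η * ψ = 0 := htop (2 + (n+k)) (by omega) _ (mem_mul hη hψ)
      exact copri hη lam hmem hF3 k m hkm ψ hψ' hcp
    · obtain ⟨m', rfl⟩ : ∃ m', m = m' + 2 := ⟨m - 2, by omega⟩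
      have hηψ : η * ψ ∈ ⋀[ℝ]^(n + (k+2)) M := by
        have := mem_mul hη hψ
        rwa [show 2 + (n+k) = n + (k+2) by omega] at this
      obtain ⟨χ, hχ, hχeq⟩ := ihm m' (by omega) (k+2) (by omega) (η * ψ) hηψ
      have hδmem : ψ - η^(k+1) * χ ∈ ⋀[ℝ]^((m'+2) + 2*k) M := by
        refine Submodule.sub_mem _ hψ' ?_
        have := mem_mul (pow_mem hη (k+1)) hχ
        rwa [show 2*(k+1) + m' = (m'+2) + 2*k by omega] at this
      have hδcp : η * (ψ - η^(k+1) * χ) = 0 := by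
        rw [mul_sub, ← eta_pow_succ_mul (η := η) (k+1) χ, hχeq]
        exact sub_self _
      obtain ⟨ρ, hρ, hρeq⟩ := copri hη lam hmem hF3 k (m'+2) hkm _ hδmem hδcp
      refine ⟨η * χ + ρ, ?_, ?_⟩
      · refine Submodule.add_mem _ ?_ hρ
        have := mem_mul hη hχ
        rwa [show 2 + m' = m' + 2 by omega] at this
      · rw [mul_add, hρeq, ← mul_assoc, ← pow_succ]
        abel

end Sl2

end HL3


/-- For a 2-form η on a real vector space of dimension 2n, η^{∧n} ≠ 0 iff all the
Lefschetz maps ω ↦ ω ∧ η^{∧k} : ⋀^{n-k}V* → ⋀^{n+k}V* (k = 1,…,n) are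
isomorphisms. This is the Hard Lefschetz property for complex tori. -/
theorem stmt_3
    {V : Type*} [AddCommGroup V] [Module ℝ V] [FiniteDimensional ℝ V]
    (n : ℕ) (hV : Module.finrank ℝ V = 2 * n)
    (η : ExteriorAlgebra ℝ (Module.Dual ℝ V))
    (hη : η ∈ ⋀[ℝ]^2 (Module.Dual ℝ V)) :
    η ^ n ≠ 0 ↔
      ∀ k : ℕ, 1 ≤ k → k ≤ n →
        (∀ ω ∈ ⋀[ℝ]^(n - k) (Module.Dual ℝ V), ω * η ^ k = 0 → ω = 0) ∧
        (∀ ψ ∈ ⋀[ℝ]^(n + k) (Module.Dual ℝ V),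
          ∃ ω ∈ ⋀[ℝ]^(n - k) (Module.Dual ℝ V), ω * η ^ k = ψ) := by
  have hr : Module.finrank ℝ (Module.Dual ℝ V) = 2 * n :=
    Subspace.dual_finrank_eq.trans hV
  constructor
  · intro hne k hk1 hkn
    obtain ⟨lam, hmem, h0, h1, hF3⟩ := HL3.exists_lam hr hη hne
    have htop : ∀ q : ℕ, 2*n < q → ∀ x ∈ ⋀[ℝ]^q (Module.Dual ℝ V), x = 0 := by
      intro q hq x hx
      exact HL3.top_vanish (by omega) hx
    constructor
    · intro ω hω hzero
      have hc : Commute η ω := HL3.commute_eta hη ω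
      apply HL3.hl_inj hη lam hmem h0 h1 hF3 (n-k) (by omega) ω hω
      rw [show n - (n-k) = k by omega, (hc.pow_left k).eq, hzero]
    · intro ψ hψ
      obtain ⟨ω, hω, heq⟩ := HL3.hl_surj hη lam hmem hF3 htop (n-k) k (by omega) ψ hψ
      have hc : Commute η ω := HL3.commute_eta hη ω
      exact ⟨ω, hω, by rw [← (hc.pow_left k).eq, heq]⟩
  · intro h
    rcases Nat.eq_zero_or_pos n with hn | hn
    · subst hn
      simpa using one_ne_zero (α := ExteriorAlgebra ℝ (Module.Dual ℝ V))
    · intro hzero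
      have h1mem : (1 : ExteriorAlgebra ℝ (Module.Dual ℝ V))
          ∈ ⋀[ℝ]^(n-n) (Module.Dual ℝ V) := by
        rw [Nat.sub_self]
        rw [exteriorPower, pow_zero]
        exact Submodule.one_le.mp le_rfl
      have := (h n hn le_rfl).1 1 h1mem (by rw [one_mul, hzero])
      exact one_ne_zero this
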